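/- arXiv:1802.10385 — 2 statements merged into one kernel-verified Lean document; each statement's English description precedes it below -/
import Mathlib

section
/- Let A be an Artin algebra and B a subalgebra of A with the same identity such that rad(B) is a left ideal of A. Then for every finitely generated B-module X and every i ≥ 2, the i-th syzygy Ω_B^i(X) carries a left A-module structure extending its B-module structure under which it is a torsionless A-module, and there exist a projective A-module P and an A-module Y such that Ω_B^i(X) ≅ Ω_A(Y) ⊕ P as A-modules. -/
universe u

open TensorProduct

section Basic

variable (Λ : Type u) [Ring Λ]

/-- `ProjDimLE Λ n M` : the module `M` admits a projective resolution of length `≤ n`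
by finitely generated projective `Λ`-modules. -/
def ProjDimLE : ℕ → ModuleCat.{u} Λ → Prop
  | 0, M => Module.Projective Λ M
  | n + 1, M => ∃ (P : ModuleCat.{u} Λ) (g : P →ₗ[Λ] M),
      Module.Projective Λ P ∧ Module.Finite Λ P ∧ Function.Surjective g ∧
      ProjDimLE n (ModuleCat.of Λ (LinearMap.ker g))

/-- The finitistic dimension of `Λ` (computed on finitely generated modules) is finite. -/
def FinFinDim : Prop :=
  ∃ n : ℕ, ∀ M : ModuleCat.{u} Λ, Module.Finite Λ M →
    (∃ k : ℕ, ProjDimLE Λ k M) → ProjDimLE Λ n M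

/-- A module is indecomposable. -/
def ModIndec (M : ModuleCat.{u} Λ) : Prop :=
  Nontrivial M ∧ ∀ N₁ N₂ : Submodule Λ M, IsCompl N₁ N₂ → N₁ = ⊥ ∨ N₂ = ⊥

/-- A class of modules has only finitely many isomorphism classes of indecomposables. -/
def ClassRepFinite (C : ModuleCat.{u} Λ → Prop) : Prop :=
  ∃ (k : ℕ) (N : Fin k → ModuleCat.{u} Λ),
    ∀ M : ModuleCat.{u} Λ, C M → ModIndec Λ M → ∃ i, Nonempty (M ≃ₗ[Λ] N i)

/-- `Λ` is representation-finite. -/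
def RepFinite : Prop :=
  ClassRepFinite Λ (fun M => Module.Finite Λ M)

/-- `X` belongs to `add N`: it is a direct summand of a finite direct sum of copies of `N`. -/
def InAdd (N X : ModuleCat.{u} Λ) : Prop :=
  ∃ (k : ℕ) (i : X →ₗ[Λ] (Fin k → N)) (p : (Fin k → N) →ₗ[Λ] X),
    p.comp i = LinearMap.id

/-- A submodule is superfluous (small). -/
def IsSuperfluous {M : ModuleCat.{u} Λ} (N : Submodule Λ M) : Prop :=
  ∀ L : Submodule Λ M, L ⊔ N = ⊤ → L = ⊤

/-- `K` is (isomorphic to) the kernel of a projective cover of `M`, i.e. a first syzygy. -/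
def IsSyzygyOf (K M : ModuleCat.{u} Λ) : Prop :=
  ∃ (P : ModuleCat.{u} Λ) (g : P →ₗ[Λ] M), Module.Projective Λ P ∧ Module.Finite Λ P ∧
    Function.Surjective g ∧ IsSuperfluous Λ (LinearMap.ker g) ∧
    Nonempty (K ≃ₗ[Λ] LinearMap.ker g)

/-- `K` is an `n`-th syzygy of `M`. -/
def IsNthSyzygy : ℕ → ModuleCat.{u} Λ → ModuleCat.{u} Λ → Prop
  | 0, K, M => Nonempty (K ≃ₗ[Λ] M)
  | n + 1, K, M => ∃ K' : ModuleCat.{u} Λ, IsNthSyzygy n K' M ∧ IsSyzygyOf Λ K K'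

/-- A class `C` of modules is `m`-syzygy-finite. -/
def MSyzygyFiniteClass (m : ℕ) (C : ModuleCat.{u} Λ → Prop) : Prop :=
  ∃ N : ModuleCat.{u} Λ, Module.Finite Λ N ∧
    ∀ X, C X → ∀ K, IsNthSyzygy Λ m K X → InAdd Λ N K

/-- A class `C` of modules is syzygy-finite. -/
def SyzygyFiniteClass (C : ModuleCat.{u} Λ → Prop) : Prop :=
  ∃ m : ℕ, MSyzygyFiniteClass Λ m C

/-- `Λ` is 1-syzygy-finite. -/
def OneSyzygyFinite : Prop :=
  MSyzygyFiniteClass Λ 1 (fun X => Module.Finite Λ X)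

/-- `Λ` is syzygy-finite. -/
def AlgSyzygyFinite : Prop :=
  SyzygyFiniteClass Λ (fun X => Module.Finite Λ X)

/-- The Jacobson radical of `Λ` (intersection of the maximal left ideals). -/
def jacobsonRad : Ideal Λ := sInf {I : Ideal Λ | I.IsMaximal}

end Basic

/-- The Jacobson radical of a subalgebra, as a subset of the ambient algebra. -/
def radSet {R A : Type u} [CommRing R] [Ring A] [Algebra R A] (S : Subalgebra R A) : Set A :=
  Subtype.val '' ((jacobsonRad ↥S : Ideal ↥S) : Set ↥S)

section Rel

variable {R : Type u} [CommRing R] {B A : Type u} [Ring B] [Ring A]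
  [Algebra R B] [Algebra R A] (φ : B →ₐ[R] A)

/-- The tensor product `A ⊗_B X` of the (A,B)-bimodule `A` with a left `A`-module `X`
(viewed as a `B`-module via `φ`), realized as a quotient of `A ⊗_R X`. -/
noncomputable def relTensor (X : ModuleCat.{u} A) : ModuleCat.{u} A :=
  letI : Module R X := Module.compHom X (algebraMap R A)
  ModuleCat.of A ((A ⊗[R] X) ⧸ Submodule.span A
    {z : A ⊗[R] X | ∃ (a : A) (b : B) (x : X),
      z = (a * φ b) ⊗ₜ[R] x - a ⊗ₜ[R] (φ b • x)})

/-- `X` is `(A,B)`-projective: a direct summand of `A ⊗_B X`. -/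
noncomputable def RelProjective (X : ModuleCat.{u} A) : Prop :=
  ∃ (i : X →ₗ[A] relTensor φ X) (p : relTensor φ X →ₗ[A] X), p.comp i = LinearMap.id

/-- The map `g` admits a `B`-linear map `h` with `g ∘ h ∘ g = g`
(this encodes `(A,B)`-exactness of the corresponding short exact sequence). -/
def RelSplitB {P X : ModuleCat.{u} A} (g : P →ₗ[A] X) : Prop :=
  ∃ h : X →+ P, (∀ (b : B) (x : X), h (φ b • x) = φ b • h x) ∧
    ∀ p : P, g (h (g p)) = g p

/-- `RelProjDimLE φ n X` : `X` has an `(A,B)`-exact resolution of length `≤ n` by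
finitely generated `(A,B)`-projective modules, i.e. relative projective dimension `≤ n`. -/
noncomputable def RelProjDimLE : ℕ → ModuleCat.{u} A → Prop
  | 0, X => RelProjective φ X
  | n + 1, X => ∃ (P : ModuleCat.{u} A) (g : P →ₗ[A] X),
      RelProjective φ P ∧ Module.Finite A P ∧ Function.Surjective g ∧ RelSplitB φ g ∧
      RelProjDimLE n (ModuleCat.of A (LinearMap.ker g))

/-- Restriction of scalars along `φ` of an `A`-module, as an object of `ModuleCat B`. -/
def resMod (X : ModuleCat.{u} A) : ModuleCat.{u} B :=
  @ModuleCat.of B _ X _ (Module.compHom X φ.toRingHom)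

/-- The right `B`-module structure on `A` induced by `φ`. -/
def rightModB : Module Bᵐᵒᵖ A :=
  Module.compHom A (RingHom.op φ.toRingHom)

end Rel


set_option maxHeartbeats 1000000
set_option synthInstance.maxHeartbeats 400000

section Aux17

variable {Λ : Type u} [Ring Λ]

/-- The preimage of a coatom under a linear map is `⊤` or a coatom. -/
lemma comap_coatom {M M' : Type u} [AddCommGroup M] [AddCommGroup M']
    [Module Λ M] [Module Λ M'] (h : M →ₗ[Λ] M') {I : Submodule Λ M'} (hI : IsCoatom I) :
    Submodule.comap h I = ⊤ ∨ IsCoatom (Submodule.comap h I) := by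
  by_cases htop : Submodule.comap h I = ⊤
  · exact Or.inl htop
  refine Or.inr ⟨htop, fun D hD => ?_⟩
  have hmap : ¬ Submodule.map h D ≤ I := fun hle =>
    absurd (Submodule.map_le_iff_le_comap.mp hle) (not_le_of_gt hD)
  have hsup : I ⊔ Submodule.map h D = ⊤ := hI.2 _ (left_lt_sup.mpr hmap)
  rw [eq_top_iff]
  intro p _
  have hp : h p ∈ I ⊔ Submodule.map h D := by rw [hsup]; trivial
  obtain ⟨y, hy, z, hz, hyz⟩ := Submodule.mem_sup.mp hp
  obtain ⟨d, hd, rfl⟩ := hz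
  have hsub : p - d ∈ Submodule.comap h I := by
    simp only [Submodule.mem_comap, map_sub]
    have heq : h p - h d = y := by rw [← hyz]; abel
    rw [heq]; exact hy
  have hpd : p - d ∈ D := hD.le hsub
  simpa using D.add_mem hpd hd

/-- Elements of the Jacobson radical multiply any element into any coatomic submodule. -/
lemma jacobsonRad_smul_mem {M : Type u} [AddCommGroup M] [Module Λ M]
    {x : Λ} (hx : x ∈ jacobsonRad Λ) {L : Submodule Λ M} (hL : IsCoatom L) (t : M) :
    x • t ∈ L := by
  set φ := LinearMap.toSpanSingleton Λ M t with hφ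
  have hφx : φ x = x • t := rfl
  rcases comap_coatom φ hL with h | h
  · have hx' : x ∈ Submodule.comap φ L := by rw [h]; trivial
    simpa [hφx] using hx'
  · have hmax : Ideal.IsMaximal (Submodule.comap φ L) := Ideal.isMaximal_def.mpr h
    have hmem : Submodule.comap φ L ∈ {I : Ideal Λ | I.IsMaximal} := hmax
    have hle : jacobsonRad Λ ≤ Submodule.comap φ L := sInf_le hmem
    simpa [hφx] using hle hx

/-- A superfluous submodule is contained in every coatom. -/
lemma superfluous_le_coatom {M : ModuleCat.{u} Λ} {N : Submodule Λ M}
    (hN : IsSuperfluous Λ N) {L : Submodule Λ M} (hL : IsCoatom L) : N ≤ L := by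
  by_contra hn
  exact hL.1 (hN L (hL.2 _ (left_lt_sup.mpr hn)))

/-- In a finitely generated module, a submodule contained in all coatoms is superfluous. -/
lemma superfluous_of_le_coatoms {M : ModuleCat.{u} Λ} (hfin : Module.Finite Λ M)
    {N : Submodule Λ M} (h : ∀ L : Submodule Λ M, IsCoatom L → N ≤ L) :
    IsSuperfluous Λ N := by
  intro L hLN
  by_contra hne
  have hco : IsCoatomic (Submodule Λ M) :=
    CompleteLattice.coatomic_of_top_compact
      ((Submodule.fg_iff_compact _).mp (Module.finite_def.mp hfin))
  rcases (hco.eq_top_or_exists_le_coatom L).resolve_left hne with ⟨L', hL', hle⟩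
  have htop : (⊤ : Submodule Λ M) ≤ L' := hLN ▸ sup_le hle (h L' hL')
  exact hL'.1 (top_le_iff.mp htop)

/-- If `rad S` is a left ideal of `A` then it lies in the Jacobson radical of `A`. -/
lemma radSet_subset_jacobsonRad {R A : Type u} [CommRing R] [Ring A] [Algebra R A]
    (S : Subalgebra R A) (hleft : ∀ a : A, ∀ x ∈ radSet S, a * x ∈ radSet S) :
    radSet S ⊆ (jacobsonRad A : Set A) := by
  intro x hx
  refine Submodule.mem_sInf.mpr fun L hL => ?_
  by_contra hxL
  have hlt : L < L ⊔ Ideal.span {x} :=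
    left_lt_sup.mpr (fun hsub => hxL (hsub (Ideal.subset_span rfl)))
  have hsup : L ⊔ Ideal.span {x} = ⊤ := (Ideal.isMaximal_def.mp hL).2 _ hlt
  have h1 : (1 : A) ∈ L ⊔ Ideal.span {x} := by rw [hsup]; trivial
  obtain ⟨y, hy, z, hz, hyz⟩ := Submodule.mem_sup.mp h1
  obtain ⟨a, rfl⟩ := Ideal.mem_span_singleton'.mp hz
  obtain ⟨r, hr, hrr⟩ := hleft a x hx
  have h1r : ∃ u : ↥S, u * (1 - r) = 1 := by
    by_contra hno
    push_neg at hno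
    have hne : Ideal.span ({1 - r} : Set ↥S) ≠ ⊤ := by
      intro htop
      have h1' : (1 : ↥S) ∈ Ideal.span ({1 - r} : Set ↥S) := by rw [htop]; trivial
      obtain ⟨u, hu⟩ := Ideal.mem_span_singleton'.mp h1'
      exact hno u hu
    obtain ⟨Lm, hLm, hle⟩ := Ideal.exists_le_maximal _ hne
    have hrL : r ∈ Lm := Submodule.mem_sInf.mp hr Lm hLm
    have h1mr : (1 - r) ∈ Lm := hle (Ideal.subset_span rfl)
    have hone : (1 : ↥S) ∈ Lm := by simpa using Lm.add_mem h1mr hrL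
    exact hLm.ne_top (Submodule.eq_top_iff'.mpr fun z => by simpa using Lm.smul_mem z hone)
  obtain ⟨u, hu⟩ := h1r
  have hyv : y = ((1 - r : ↥S) : A) := by
    push_cast
    rw [hrr]
    exact eq_sub_of_add_eq hyz
  have honeL : (1 : A) ∈ L := by
    have hmul : ((u : A)) * y ∈ L := L.smul_mem _ hy
    rw [hyv] at hmul
    have hcast : ((u * (1 - r) : ↥S) : A) = (u : A) * ((1 - r : ↥S) : A) := by push_cast; ring_nf
    have : ((u * (1 - r) : ↥S) : A) ∈ L := by rw [hcast]; exact hmul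
    rw [hu] at this
    simpa using this
  exact hL.ne_top (Submodule.eq_top_iff'.mpr fun z => by simpa using L.smul_mem z honeL)

/-- Coordinatewise inclusion of `(Fin k → S)` into `(Fin k → A)`. -/
def coePi {R A : Type u} [CommRing R] [Ring A] [Algebra R A] (S : Subalgebra R A) (k : ℕ) :
    (Fin k → ↥S) →+ (Fin k → A) :=
  AddMonoidHom.mk' (fun w j => (w j : A)) (fun w w' => by funext j; push_cast; rfl)

lemma coePi_smul {R A : Type u} [CommRing R] [Ring A] [Algebra R A] (S : Subalgebra R A)
    (k : ℕ) (b : ↥S) (w : Fin k → ↥S) :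
    coePi S k (b • w) = (b : A) • coePi S k w := by
  funext j
  show ((b * w j : ↥S) : A) = (b : A) * (w j : A)
  push_cast; rfl

lemma coePi_inj {R A : Type u} [CommRing R] [Ring A] [Algebra R A] (S : Subalgebra R A)
    (k : ℕ) : Function.Injective (coePi S k) := fun w w' h =>
  funext fun j => Subtype.coe_injective (congrFun h j)

/-- The `A`-linear extension of an `S`-linear map between finite free modules. -/
def extMap {R A : Type u} [CommRing R] [Ring A] [Algebra R A] {S : Subalgebra R A} {m n : ℕ}
    (χ : (Fin m → ↥S) →ₗ[↥S] (Fin n → ↥S)) : (Fin m → A) →ₗ[A] (Fin n → A) where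
  toFun v := ∑ j, v j • coePi S n (χ (Pi.single j (1 : ↥S) : Fin m → ↥S))
  map_add' v w := by simp [add_smul, Finset.sum_add_distrib]
  map_smul' a v := by simp [Pi.smul_apply, smul_eq_mul, mul_smul, Finset.smul_sum]

lemma extMap_coe {R A : Type u} [CommRing R] [Ring A] [Algebra R A] {S : Subalgebra R A}
    {m n : ℕ} (χ : (Fin m → ↥S) →ₗ[↥S] (Fin n → ↥S)) (w : Fin m → ↥S) :
    extMap χ (coePi S m w) = coePi S n (χ w) := by
  have hsingle : ∀ (j : Fin m), Pi.single j (w j) = w j • (Pi.single j (1 : ↥S) : Fin m → ↥S) := by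
    intro j; funext j'
    by_cases h : j' = j
    · subst h; simp
    · simp [Pi.single_eq_of_ne h]
  have hχ : χ w = ∑ j, w j • χ (Pi.single j (1 : ↥S) : Fin m → ↥S) := by
    conv_lhs => rw [← Finset.univ_sum_single w]
    rw [map_sum]
    refine Finset.sum_congr rfl fun j _ => ?_
    rw [hsingle j, map_smul]
  rw [hχ, map_sum]
  show _ = ∑ j, coePi S n (w j • χ (Pi.single j (1 : ↥S) : Fin m → ↥S))
  rw [show (∑ j, coePi S n (w j • χ (Pi.single j (1 : ↥S) : Fin m → ↥S)))
      = ∑ j, ((w j : A)) • coePi S n (χ (Pi.single j (1 : ↥S) : Fin m → ↥S)) from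
    Finset.sum_congr rfl fun j _ => coePi_smul S n (w j) _]
  rfl

end Aux17

variable {R : Type u} [CommRing R] [IsArtinianRing R]
  {A : Type u} [Ring A] [Algebra R A] [Module.Finite R A]

/-- If `B ⊆ A` is a subalgebra with `rad B` a left ideal of `A`, then for
every f.g. `B`-module `X` and every `i ≥ 2`, the syzygy `Ω_B^i X` carries an `A`-module
structure extending its `B`-module structure, is torsionless over `A`, and is of the form
`Ω_A(Y) ⊕ P` with `P` projective. -/
theorem statement17 (S : Subalgebra R A)
    (hleft : ∀ a : A, ∀ x ∈ radSet S, a * x ∈ radSet S) :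
    ∀ X : ModuleCat.{u} ↥S, Module.Finite ↥S X → ∀ i : ℕ, 2 ≤ i →
      ∀ K : ModuleCat.{u} ↥S, IsNthSyzygy ↥S i K X →
        ∃ (K' : ModuleCat.{u} A) (e : K ≃+ K'),
          (∀ (b : ↥S) (v : K), e (b • v) = (b : A) • e v) ∧
          (∃ Q : ModuleCat.{u} A, Module.Projective A Q ∧ Module.Finite A Q ∧
            ∃ f : K' →ₗ[A] Q, Function.Injective f) ∧
          ∃ (Y P W : ModuleCat.{u} A), Module.Finite A Y ∧ Module.Projective A P ∧
            Module.Finite A P ∧ IsNthSyzygy A 1 W Y ∧ Nonempty (K' ≃ₗ[A] W × P) := by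
  intro X _ i hi K hK
  obtain ⟨i', rfl⟩ : ∃ i', i = i' + 2 := ⟨i - 2, by omega⟩
  obtain ⟨K₁, hK₁, hKsyz⟩ := hK
  obtain ⟨K₂, -, hK₁syz⟩ := hK₁
  obtain ⟨P₁, f, hP₁proj, hP₁fin, -, hsup, ⟨eK⟩⟩ := hKsyz
  obtain ⟨P₀, g, hP₀proj, hP₀fin, -, -, ⟨eK₁⟩⟩ := hK₁syz
  haveI := hP₁proj; haveI := hP₁fin; haveI := hP₀proj; haveI := hP₀fin
  obtain ⟨m, p₁, hp₁⟩ := Module.Finite.exists_fin' ↥S P₁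
  obtain ⟨s₁, hs₁⟩ := Module.projective_lifting_property p₁ LinearMap.id hp₁
  obtain ⟨n, p₀, hp₀⟩ := Module.Finite.exists_fin' ↥S P₀
  obtain ⟨s₀, hs₀⟩ := Module.projective_lifting_property p₀ LinearMap.id hp₀
  have hps₁ : ∀ x : P₁, p₁ (s₁ x) = x := fun x => DFunLike.congr_fun hs₁ x
  have hps₀ : ∀ x : P₀, p₀ (s₀ x) = x := fun x => DFunLike.congr_fun hs₀ x
  have hs₁inj : Function.Injective s₁ := fun x y h => by rw [← hps₁ x, ← hps₁ y, h]
  have hs₀inj : Function.Injective s₀ := fun x y h => by rw [← hps₀ x, ← hps₀ y, h]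
  -- coordinates of syzygy elements lie in the radical of `S`
  have hcoord : ∀ k : P₁, f k = 0 → ∀ jdx : Fin m, s₁ k jdx ∈ jacobsonRad ↥S := by
    intro k hk jdx
    refine Submodule.mem_sInf.mpr fun I hI => ?_
    rcases comap_coatom ((LinearMap.proj jdx).comp s₁) (Ideal.isMaximal_def.mp hI)
      with htop | hco
    · have hk' : k ∈ Submodule.comap ((LinearMap.proj jdx).comp s₁) I := by rw [htop]; trivial
      simpa using hk'
    · have hle := superfluous_le_coatom hsup hco
      have hk' := hle (LinearMap.mem_ker.mpr hk)
      simpa using hk'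
  -- the two `S`-linear maps to be extended
  set ψ : (Fin m → ↥S) →ₗ[↥S] (Fin n → ↥S) :=
    s₀ ∘ₗ (LinearMap.ker g).subtype ∘ₗ eK₁.toLinearMap ∘ₗ f ∘ₗ p₁ with hψdef
  set π : (Fin m → ↥S) →ₗ[↥S] (Fin m → ↥S) := s₁ ∘ₗ p₁ with hπdef
  have hψzero : ∀ w : Fin m → ↥S, ψ w = 0 → f (p₁ w) = 0 := by
    intro w hw
    have h1 : s₀ ((LinearMap.ker g).subtype (eK₁ (f (p₁ w)))) = 0 := hw
    have h2 : (LinearMap.ker g).subtype (eK₁ (f (p₁ w))) = 0 := hs₀inj (by rw [h1, map_zero])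
    have h3 : eK₁ (f (p₁ w)) = 0 := Subtype.coe_injective (by simpa using h2)
    exact eK₁.map_eq_zero_iff.mp h3
  have hψs₁ : ∀ k : P₁, f k = 0 → ψ (s₁ k) = 0 := by
    intro k hk
    show s₀ ((LinearMap.ker g).subtype (eK₁ (f (p₁ (s₁ k))))) = 0
    rw [hps₁, hk, map_zero]
    simp
  have hπs₁ : ∀ k : P₁, π (s₁ k) = s₁ k := fun k => by
    show s₁ (p₁ (s₁ k)) = s₁ k
    rw [hps₁]
  -- the carrier of the `A`-module structure
  let T : Submodule A (Fin m → A) :=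
    { carrier := { v | ∃ k : P₁, f k = 0 ∧ coePi S m (s₁ k) = v }
      add_mem' := by
        rintro v w ⟨k, hk, rfl⟩ ⟨k', hk', rfl⟩
        exact ⟨k + k', by rw [map_add, hk, hk', add_zero], by rw [map_add, map_add]⟩
      zero_mem' := ⟨0, by simp, by simp⟩
      smul_mem' := by
        rintro a v ⟨k, hk, rfl⟩
        have hmemrad : ∀ jdx : Fin m, (a • coePi S m (s₁ k)) jdx ∈ radSet S := by
          intro jdx
          have h2 : ((s₁ k jdx : ↥S) : A) ∈ radSet S := ⟨s₁ k jdx, hcoord k hk jdx, rfl⟩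
          have h3 : (a • coePi S m (s₁ k)) jdx = a * ((s₁ k jdx : ↥S) : A) := rfl
          rw [h3]
          exact hleft a _ h2
        choose u hu huv using hmemrad
        have hιu : coePi S m u = a • coePi S m (s₁ k) := funext huv
        refine ⟨p₁ u, ?_, ?_⟩
        · refine hψzero u (coePi_inj S n ?_)
          rw [map_zero]
          calc coePi S n (ψ u) = extMap ψ (coePi S m u) := (extMap_coe ψ u).symm
            _ = extMap ψ (a • coePi S m (s₁ k)) := by rw [hιu]
            _ = a • extMap ψ (coePi S m (s₁ k)) := map_smul _ _ _
            _ = a • coePi S n (ψ (s₁ k)) := by rw [extMap_coe]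
            _ = 0 := by rw [hψs₁ k hk, map_zero, smul_zero]
        · calc coePi S m (s₁ (p₁ u)) = coePi S m (π u) := rfl
            _ = extMap π (coePi S m u) := (extMap_coe π u).symm
            _ = a • extMap π (coePi S m (s₁ k)) := by rw [hιu, map_smul]
            _ = a • coePi S m (π (s₁ k)) := by rw [extMap_coe]
            _ = a • coePi S m (s₁ k) := by rw [hπs₁] }
  -- superfluousness of `T` inside the free `A`-module
  have hTcoatom : ∀ L : Submodule A (Fin m → A), IsCoatom L → T ≤ L := by
    rintro L hL v ⟨k, hk, rfl⟩
    have hvj : ∀ jdx : Fin m, coePi S m (s₁ k) jdx ∈ jacobsonRad A := fun jdx =>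
      radSet_subset_jacobsonRad S hleft ⟨s₁ k jdx, hcoord k hk jdx, rfl⟩
    rw [pi_eq_sum_univ (coePi S m (s₁ k))]
    exact Submodule.sum_mem _ fun jdx _ => jacobsonRad_smul_mem (hvj jdx) hL _
  have hTsup : IsSuperfluous A (M := ModuleCat.of A (Fin m → A)) T :=
    superfluous_of_le_coatoms (inferInstanceAs (Module.Finite A (Fin m → A))) hTcoatom
  -- the additive equivalence
  have hmemT : ∀ k : K, coePi S m (s₁ ((eK k : ↥(LinearMap.ker f)) : P₁)) ∈ T := fun k =>
    ⟨((eK k : ↥(LinearMap.ker f)) : P₁), LinearMap.mem_ker.mp (eK k).2, rfl⟩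
  let E : K → ↥T := fun k => ⟨coePi S m (s₁ ((eK k : ↥(LinearMap.ker f)) : P₁)), hmemT k⟩
  have hEadd : ∀ x y : K, E (x + y) = E x + E y := by
    intro x y
    apply Subtype.ext
    show coePi S m (s₁ ((eK (x + y) : ↥(LinearMap.ker f)) : P₁)) = _
    rw [map_add eK]
    show coePi S m (s₁ (((eK x : ↥(LinearMap.ker f)) : P₁) + ((eK y : ↥(LinearMap.ker f)) : P₁))) = _
    rw [map_add s₁, map_add]
    rfl
  have hEinj : Function.Injective E := by
    intro x y h
    have h1 : coePi S m (s₁ ((eK x : ↥(LinearMap.ker f)) : P₁))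
        = coePi S m (s₁ ((eK y : ↥(LinearMap.ker f)) : P₁)) := congrArg Subtype.val h
    exact eK.injective (Subtype.ext (hs₁inj (coePi_inj S m h1)))
  have hEsurj : Function.Surjective E := by
    rintro ⟨v, k₀, hk₀, rfl⟩
    refine ⟨eK.symm ⟨k₀, LinearMap.mem_ker.mpr hk₀⟩, ?_⟩
    apply Subtype.ext
    show coePi S m (s₁ ((eK (eK.symm ⟨k₀, LinearMap.mem_ker.mpr hk₀⟩) : ↥(LinearMap.ker f)) : P₁))
      = coePi S m (s₁ k₀)
    rw [eK.apply_symm_apply]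
  refine ⟨ModuleCat.of A ↥T, AddEquiv.mk' (Equiv.ofBijective E ⟨hEinj, hEsurj⟩) hEadd,
    ?_, ?_, ?_⟩
  · intro b v
    apply Subtype.ext
    show coePi S m (s₁ ((eK (b • v) : ↥(LinearMap.ker f)) : P₁))
      = (b : A) • coePi S m (s₁ ((eK v : ↥(LinearMap.ker f)) : P₁))
    rw [map_smul eK]
    show coePi S m (s₁ (b • ((eK v : ↥(LinearMap.ker f)) : P₁))) = _
    rw [map_smul s₁, coePi_smul]
  · exact ⟨ModuleCat.of A (Fin m → A), inferInstanceAs (Module.Projective A (Fin m → A)),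
      inferInstanceAs (Module.Finite A (Fin m → A)), T.subtype, Submodule.injective_subtype T⟩
  · refine ⟨ModuleCat.of A ((Fin m → A) ⧸ T), ModuleCat.of A (Fin 0 → A), ModuleCat.of A ↥T,
      inferInstanceAs (Module.Finite A ((Fin m → A) ⧸ T)),
      inferInstanceAs (Module.Projective A (Fin 0 → A)),
      inferInstanceAs (Module.Finite A (Fin 0 → A)), ?_, ⟨?_⟩⟩
    · refine ⟨ModuleCat.of A ((Fin m → A) ⧸ T), ⟨LinearEquiv.refl A _⟩,
        ModuleCat.of A (Fin m → A), T.mkQ,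
        inferInstanceAs (Module.Projective A (Fin m → A)),
        inferInstanceAs (Module.Finite A (Fin m → A)),
        Submodule.mkQ_surjective T, ?_, ⟨LinearEquiv.ofEq _ _ (Submodule.ker_mkQ T).symm⟩⟩
      rw [Submodule.ker_mkQ]
      exact hTsup
    · exact
        { toFun := fun x => (x, 0)
          invFun := Prod.fst
          left_inv := fun x => rfl
          right_inv := fun y => by
            refine Prod.ext rfl ?_
            exact Subsingleton.elim _ _
          map_add' := fun x y => by
            refine Prod.ext rfl ?_
            simp
          map_smul' := fun a x => by
            refine Prod.ext rfl ?_
            exact Subsingleton.elim _ _ }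
end

section
/- Let A be an Artin algebra and B a subalgebra of A with the same identity, and suppose I is a two-sided ideal of B that is also a left ideal of A. Then for every torsionless finitely generated B-module X, the B-module IX carries a left A-module structure extending its B-module structure under which it is a torsionless A-module, and there exist a projective A-module Q and an A-module Z such that IX ≅ Ω_A(Z) ⊕ Q as A-modules. -/
universe u

open TensorProduct

variable {R : Type u} [CommRing R] [IsArtinianRing R]
  {A : Type u} [Ring A] [Algebra R A] [Module.Finite R A]

/-!
Embed the torsionless module `X` into a free module `Sⁿ ⊆ Aⁿ`. Since `I` is a left ideal of `A`,
the image of `I X` is an `A`-submodule `K` of `F = Aⁿ`; this gives the `A`-structure and shows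
that `I X` is torsionless over `A`. Over the Artinian ring `A`, a minimal projective submodule of
`F` mapping onto `F ⧸ K` is a projective cover `P₀ → F ⧸ K` (minimality plus Fitting's lemma).
Lifting `F → F ⧸ K` through it gives a surjection `F → P₀`, which splits, so
`K ≅ Ω(F ⧸ K) ⊕ ker (F → P₀)`.
-/

open Function LinearMap

section Splitting

variable {Λ F P Z : Type*} [Ring Λ] [AddCommGroup F] [Module Λ F] [AddCommGroup P] [Module Λ P]
  [AddCommGroup Z] [Module Λ Z]

noncomputable def LinearMap.kerCompEquivProdOfRightInverse (g : P →ₗ[Λ] Z) (h : F →ₗ[Λ] P)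
    (s : P →ₗ[Λ] F) (hs : ∀ p, h (s p) = p) : ker (g ∘ₗ h) ≃ₗ[Λ] ker g × ker h where
  toFun x := (⟨h x, x.2⟩, ⟨x - s (h x), by simp [hs]⟩)
  invFun y := ⟨s y.1 + y.2, by simp [hs, mem_ker.mp y.1.2, mem_ker.mp y.2.2]⟩
  map_add' x y := by ext <;> simp; abel
  map_smul' a x := by ext <;> simp [smul_sub]
  left_inv x := by ext; simp
  right_inv y := by ext <;> simp [hs, mem_ker.mp y.2.2]

theorem LinearMap.projective_ker_of_rightInverse [Module.Projective Λ F] (h : F →ₗ[Λ] P)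
    (s : P →ₗ[Λ] F) (hs : ∀ p, h (s p) = p) : Module.Projective Λ (ker h) :=
  .of_split (ker h).subtype (codRestrict (ker h) (id - s ∘ₗ h) fun x => by simp [hs])
    (by ext x; simp [mem_ker.mp x.2])

theorem Submodule.projective_of_isCompl [Module.Projective Λ F] {p q : Submodule Λ F}
    (hpq : IsCompl p q) : Module.Projective Λ p :=
  .of_split p.subtype (p.projectionOnto q hpq) (by ext x; simp)

theorem LinearMap.range_sup_ker_eq_top_of_surjective_comp (g : P →ₗ[Λ] Z) (h : F →ₗ[Λ] P)
    (hgh : Surjective (g ∘ₗ h)) : range h ⊔ ker g = ⊤ := by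
  refine Submodule.eq_top_iff'.mpr fun p => ?_
  obtain ⟨x, hx⟩ := hgh (g p)
  exact Submodule.mem_sup.mpr ⟨h x, mem_range_self h x, p - h x,
    by simp [← hx], add_sub_cancel _ _⟩

theorem LinearMap.comp_pow_eq_self {g : P →ₗ[Λ] Z} {φ : Module.End Λ P} (hφ : g ∘ₗ φ = g) :
    ∀ m : ℕ, g ∘ₗ φ ^ m = g
  | 0 => rfl
  | m + 1 => by rw [pow_succ, Module.End.mul_eq_comp, ← comp_assoc, comp_pow_eq_self hφ m, hφ]

end Splitting

section ProjectiveCover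

variable {Λ P Z : Type*} [Ring Λ] [IsArtinianRing Λ] [AddCommGroup P] [Module Λ P]
  [AddCommGroup Z] [Module Λ Z]

/-- Fitting's lemma applied to a lift `φ : P → L ⊆ P` of `g` along `g|_L`: for large `m` the
range of `φ ^ m` is a direct summand of `P` inside `L` that still maps onto `Z`. -/
theorem exists_projective_lt_top_surjective [Module.Projective Λ P] [Module.Finite Λ P]
    {g : P →ₗ[Λ] Z} (hg : Surjective g) {L : Submodule Λ P} (hL : L ⊔ ker g = ⊤)
    (hLtop : L ≠ ⊤) :
    ∃ P' : Submodule Λ P, P' < ⊤ ∧ Module.Projective Λ P' ∧ Surjective (g ∘ₗ P'.subtype) := by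
  have hgL : Surjective (g ∘ₗ L.subtype) := by
    intro z
    obtain ⟨p, rfl⟩ := hg z
    obtain ⟨l, hl, k, hk, rfl⟩ := Submodule.mem_sup.mp (hL ▸ Submodule.mem_top : p ∈ L ⊔ ker g)
    exact ⟨⟨l, hl⟩, by simp [mem_ker.mp hk]⟩
  obtain ⟨ψ, hψ⟩ := Module.projective_lifting_property (g ∘ₗ L.subtype) g hgL
  let φ : Module.End Λ P := L.subtype ∘ₗ ψ
  have hgφ : g ∘ₗ φ = g := hψ
  obtain ⟨m, hm, hcompl⟩ : ∃ m, 1 ≤ m ∧ IsCompl (ker (φ ^ m)) (range (φ ^ m)) :=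
    ((Filter.eventually_ge_atTop 1).and φ.eventually_isCompl_ker_pow_range_pow).exists
  have hrange : range (φ ^ m) ≤ L := by
    obtain ⟨k, rfl⟩ := Nat.exists_eq_add_of_le' hm
    rw [pow_succ', Module.End.mul_eq_comp]
    exact (range_comp_le_range _ _).trans ((range_comp_le_range _ _).trans L.range_subtype.le)
  refine ⟨range (φ ^ m), hrange.trans_lt hLtop.lt_top, Submodule.projective_of_isCompl hcompl.symm,
    fun z => ?_⟩
  obtain ⟨p, rfl⟩ := hg z
  exact ⟨⟨(φ ^ m) p, mem_range_self _ p⟩, LinearMap.congr_fun (comp_pow_eq_self hgφ m) p⟩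

theorem exists_submodule_projectiveCover {F : Type*} [AddCommGroup F] [Module Λ F]
    [Module.Projective Λ F] [Module.Finite Λ F] {π : F →ₗ[Λ] Z} (hπ : Surjective π) :
    ∃ (P₀ : Submodule Λ F) (g : P₀ →ₗ[Λ] Z), Module.Projective Λ P₀ ∧ Surjective g ∧
      ∀ L : Submodule Λ P₀, L ⊔ ker g = ⊤ → L = ⊤ := by
  obtain ⟨P₀, ⟨hP₀, g, hg⟩, hmin⟩ := IsArtinian.set_has_minimal
    {P : Submodule Λ F | Module.Projective Λ P ∧ ∃ g : P →ₗ[Λ] Z, Surjective g}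
    ⟨⊤, .of_equiv Submodule.topEquiv.symm, π ∘ₗ Submodule.topEquiv.toLinearMap,
      hπ.comp Submodule.topEquiv.surjective⟩
  refine ⟨P₀, g, hP₀, hg, fun L hL => by_contra fun hLtop => ?_⟩
  obtain ⟨P', hP'top, hP', hgP'⟩ := exists_projective_lt_top_surjective hg hL hLtop
  let e : P' ≃ₗ[Λ] P'.map P₀.subtype := P'.equivMapOfInjective _ P₀.injective_subtype
  refine hmin _ ⟨.of_equiv e, g ∘ₗ P'.subtype ∘ₗ e.symm.toLinearMap, hgP'.comp e.symm.surjective⟩ ?_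
  simpa using Submodule.map_strictMono_of_injective P₀.injective_subtype hP'top

end ProjectiveCover

theorem Submodule.exists_equiv_syzygy_prod_projective {Λ F : Type u} [Ring Λ] [IsArtinianRing Λ]
    [AddCommGroup F] [Module Λ F] [Module.Projective Λ F] [Module.Finite Λ F]
    (K : Submodule Λ F) :
    ∃ (Z P W : ModuleCat.{u} Λ), Module.Finite Λ Z ∧ Module.Projective Λ P ∧
      Module.Finite Λ P ∧ IsNthSyzygy Λ 1 W Z ∧ Nonempty (K ≃ₗ[Λ] W × P) := by
  obtain ⟨P₀, g, hP₀, hg, hsup⟩ := exists_submodule_projectiveCover K.mkQ_surjective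
  obtain ⟨h, hgh⟩ := Module.projective_lifting_property g K.mkQ hg
  have hh : Surjective h :=
    range_eq_top.mp <| hsup _ <| range_sup_ker_eq_top_of_surjective_comp g h <|
      hgh ▸ K.mkQ_surjective
  obtain ⟨s, hs⟩ := Module.projective_lifting_property h LinearMap.id hh
  have hs' : ∀ p, h (s p) = p := LinearMap.congr_fun hs
  refine ⟨.of Λ (F ⧸ K), .of Λ (ker h), .of Λ (ker g), inferInstance,
    projective_ker_of_rightInverse h s hs', inferInstance,
    ⟨.of Λ (F ⧸ K), ⟨.refl _ _⟩, .of Λ P₀, g, hP₀, inferInstance, hg, hsup, ⟨.refl _ _⟩⟩,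
    ⟨(LinearEquiv.ofEq _ _ ?_).trans (kerCompEquivProdOfRightInverse g h s hs')⟩⟩
  rw [hgh, K.ker_mkQ]

theorem Module.exists_injective_pi_fin_of_injective {S X Q : Type*} [Ring S] [AddCommGroup X]
    [Module S X] [AddCommGroup Q] [Module S Q] [Module.Projective S Q] [Module.Finite S Q]
    {f : X →ₗ[S] Q} (hf : Function.Injective f) :
    ∃ (n : ℕ) (g : X →ₗ[S] Fin n → S), Function.Injective g := by
  obtain ⟨n, ρ, hρ⟩ := Module.Finite.exists_fin' S Q
  obtain ⟨σ, hσ⟩ := Module.projective_lifting_property ρ LinearMap.id hρ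
  exact ⟨n, σ ∘ₗ f, (LeftInverse.injective (g := ρ) (LinearMap.congr_fun hσ)).comp hf⟩

theorem Submodule.exists_restrictScalars_eq {S Λ M : Type*} [Semiring S] [Semiring Λ] [SMul S Λ]
    [AddCommMonoid M] [Module S M] [Module Λ M] [IsScalarTower S Λ M] (N : Submodule S M)
    (hN : ∀ a : Λ, ∀ x ∈ N, a • x ∈ N) : ∃ K : Submodule Λ M, K.restrictScalars S = N :=
  ⟨{ N with smul_mem' := hN }, rfl⟩

section IdealSMul

variable {k Λ : Type*} [CommRing k] [Ring Λ] [Algebra k Λ] {S : Subalgebra k Λ} {I : Ideal S}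
  {X M : Type*} [AddCommGroup X] [Module S X] [AddCommGroup M] [Module Λ M]

theorem smul_mem_map_span_ideal_smul
    (hI : ∀ a : Λ, ∀ x ∈ I, ∃ h : a * (x : Λ) ∈ S, (⟨a * (x : Λ), h⟩ : S) ∈ I)
    (ι : X →ₗ[S] M) (a : Λ) {v : X}
    (hv : v ∈ Submodule.span S {v : X | ∃ i ∈ I, ∃ x₀ : X, v = i • x₀}) :
    a • ι v ∈ (Submodule.span S {v : X | ∃ i ∈ I, ∃ x₀ : X, v = i • x₀}).map ι := by
  induction hv using Submodule.span_induction generalizing a with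
  | mem v hv =>
    obtain ⟨i, hi, x₀, rfl⟩ := hv
    obtain ⟨hai, hai'⟩ := hI a i hi
    refine ⟨(⟨a * i, hai⟩ : S) • x₀, Submodule.subset_span ⟨_, hai', x₀, rfl⟩, ?_⟩
    rw [map_smul, map_smul, Subalgebra.smul_def, Subalgebra.smul_def, mul_smul]
  | zero => simp
  | add x y _ _ hx hy => simpa only [map_add, smul_add] using Submodule.add_mem _ (hx a) (hy a)
  | smul c x _ hx => simpa only [map_smul, Subalgebra.smul_def, smul_smul] using hx (a * c)

end IdealSMul

theorem statement18_general (S : Subalgebra R A) (I : Ideal ↥S)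
    (hleftA : ∀ a : A, ∀ x ∈ I, ∃ h : a * (x : A) ∈ S, (⟨a * (x : A), h⟩ : ↥S) ∈ I) :
    ∀ X : ModuleCat.{u} ↥S, Module.Finite ↥S X →
      (∃ Q₀ : ModuleCat.{u} ↥S, Module.Projective ↥S Q₀ ∧ Module.Finite ↥S Q₀ ∧
        ∃ f : X →ₗ[↥S] Q₀, Function.Injective f) →
      ∀ IX : Submodule ↥S X,
        IX = Submodule.span ↥S {v : X | ∃ i : ↥S, i ∈ I ∧ ∃ x₀ : X, v = i • x₀} →
        ∃ (K' : ModuleCat.{u} A) (e : ↥IX ≃+ K'),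
          (∀ (b : ↥S) (v : ↥IX), e (b • v) = (b : A) • e v) ∧
          (∃ Q : ModuleCat.{u} A, Module.Projective A Q ∧ Module.Finite A Q ∧
            ∃ f : K' →ₗ[A] Q, Function.Injective f) ∧
          ∃ (Z P W : ModuleCat.{u} A), Module.Finite A Z ∧ Module.Projective A P ∧
            Module.Finite A P ∧ IsNthSyzygy A 1 W Z ∧ Nonempty (K' ≃ₗ[A] W × P) := by
  rintro X - ⟨Q₀, _, _, f, hf⟩ IX rfl
  have : IsArtinianRing A := .of_finite R A
  obtain ⟨n, g, hg⟩ := Module.exists_injective_pi_fin_of_injective hf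
  -- `toSpanSingleton S A 1` is the inclusion `S → A`
  let ι : X →ₗ[S] Fin n → A := (LinearMap.toSpanSingleton S A 1).compLeft (Fin n) ∘ₗ g
  have hι : Injective ι := fun x y hxy =>
    hg (funext fun j => Subtype.ext (by simpa [ι, Subalgebra.smul_def] using congrFun hxy j))
  obtain ⟨K, hK⟩ := Submodule.exists_restrictScalars_eq (Λ := A) (Submodule.map ι _) <| by
    rintro a _ ⟨v, hv, rfl⟩
    exact smul_mem_map_span_ideal_smul hleftA ι a hv
  let e := (Submodule.equivMapOfInjective ι hι _).trans (LinearEquiv.ofEq _ _ hK.symm)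
  exact ⟨.of A K, e.toAddEquiv, map_smul e,
    ⟨.of A (Fin n → A), inferInstance, inferInstance, K.subtype, K.injective_subtype⟩,
    K.exists_equiv_syzygy_prod_projective⟩

set_option synthInstance.maxHeartbeats 1000000 in
/-- If `B ⊆ A` is a subalgebra and `I` is an ideal of `B` which is a left
ideal of `A`, then for every torsionless f.g. `B`-module `X`, the module `I X` carries an
`A`-module structure extending its `B`-module structure, is torsionless over `A`, and is of
the form `Ω_A(Z) ⊕ Q` with `Q` projective. -/
theorem statement18 (S : Subalgebra R A) (I : Ideal ↥S)
    (hright : ∀ x ∈ I, ∀ b : ↥S, x * b ∈ I)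
    (hleftA : ∀ a : A, ∀ x ∈ I, ∃ h : a * (x : A) ∈ S, (⟨a * (x : A), h⟩ : ↥S) ∈ I) :
    ∀ X : ModuleCat.{u} ↥S, Module.Finite ↥S X →
      (∃ Q₀ : ModuleCat.{u} ↥S, Module.Projective ↥S Q₀ ∧ Module.Finite ↥S Q₀ ∧
        ∃ f : X →ₗ[↥S] Q₀, Function.Injective f) →
      ∀ IX : Submodule ↥S X,
        IX = Submodule.span ↥S {v : X | ∃ i : ↥S, i ∈ I ∧ ∃ x₀ : X, v = i • x₀} →
        ∃ (K' : ModuleCat.{u} A) (e : ↥IX ≃+ K'),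
          (∀ (b : ↥S) (v : ↥IX), e (b • v) = (b : A) • e v) ∧
          (∃ Q : ModuleCat.{u} A, Module.Projective A Q ∧ Module.Finite A Q ∧
            ∃ f : K' →ₗ[A] Q, Function.Injective f) ∧
          ∃ (Z P W : ModuleCat.{u} A), Module.Finite A Z ∧ Module.Projective A P ∧
            Module.Finite A P ∧ IsNthSyzygy A 1 W Z ∧ Nonempty (K' ≃ₗ[A] W × P) :=
  statement18_general S I hleftA
end
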